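/- arXiv:1107.4111 — 3 statements merged into one kernel-verified Lean document; each statement's English description precedes it below -/
import Mathlib

section
/- Let n ≥ 2 be an integer. There exists a constant c > 0, depending only on n, such that for every number field K of degree n over ℚ there is a nonzero algebraic integer α in the ring of integers of K with Tr_{K/ℚ}(α) = 0 and |σ(α)| ≤ c · |d_K|^{1/(2(n-1))} for every field embedding σ : K → ℂ, where d_K denotes the discriminant of K. -/
/-!
Minkowski's theorem, applied to a box that is narrow at one infinite place `w₀` (`|x| < 1` at a
real place, `|Re x| < 1` at a complex one) and of size `B ≍ |d_K|^{1/(2(n-1))}` at the others,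
gives a nonzero algebraic integer `a` with all conjugates at most `1 + B`. The narrow side rules
out `a ∈ ℤ`, hence `a ∉ ℚ`, so `α = n a - Tr a` is a nonzero algebraic integer of trace zero with
conjugates bounded by `2n(1 + B)`.
-/

open NumberField NumberField.InfinitePlace NumberField.mixedEmbedding Module MeasureTheory
open scoped ENNReal NNReal

theorem Algebra.trace_finrank_smul_sub_algebraMap_trace {R S : Type*} [CommRing R]
    [StrongRankCondition R] [CommRing S] [Algebra R S] [Module.Free R S] (x : S) :
    Algebra.trace R S (finrank R S • x - algebraMap R S (Algebra.trace R S x)) = 0 := by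
  rw [map_sub, map_nsmul, Algebra.trace_algebraMap, sub_self]

namespace NumberField

variable {K : Type*} [Field K] [NumberField K]

theorem norm_algebraMap_trace_le {x : K} {M : ℝ} (h : ∀ σ : K →+* ℂ, ‖σ x‖ ≤ M) :
    ‖algebraMap ℚ ℂ (Algebra.trace ℚ K x)‖ ≤ finrank ℚ K * M := by
  rw [trace_eq_sum_embeddings ℂ]
  calc ‖∑ σ : K →ₐ[ℚ] ℂ, σ x‖ ≤ ∑ σ : K →ₐ[ℚ] ℂ, ‖σ x‖ := norm_sum_le _ _
    _ ≤ ∑ _σ : K →ₐ[ℚ] ℂ, M := Finset.sum_le_sum fun σ _ ↦ h σ.toRingHom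
    _ = finrank ℚ K * M := by rw [Finset.sum_const, Finset.card_univ, AlgHom.card, nsmul_eq_mul]

theorem exists_ne_zero_trace_eq_zero_norm_le_of_notMem_range {a : 𝓞 K}
    (ha : (a : K) ∉ Set.range (algebraMap ℚ K)) {M : ℝ} (hM : ∀ σ : K →+* ℂ, ‖σ a‖ ≤ M) :
    ∃ α : 𝓞 K, α ≠ 0 ∧ Algebra.trace ℚ K (α : K) = 0 ∧
      ∀ σ : K →+* ℂ, ‖σ α‖ ≤ 2 * finrank ℚ K * M := by
  set α := finrank ℤ (𝓞 K) • a - algebraMap ℤ (𝓞 K) (Algebra.trace ℤ (𝓞 K) a)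
  have hα : (α : K) = finrank ℚ K • (a : K) - algebraMap ℚ K (Algebra.trace ℚ K a) := by
    simp [α, RingOfIntegers.rank, ← Algebra.coe_trace_int]
  refine ⟨α, ?_, ?_, fun σ ↦ ?_⟩
  · rintro hα0
    refine ha ⟨Algebra.trace ℚ K a / finrank ℚ K, ?_⟩
    have hna : finrank ℚ K • (a : K) = algebraMap ℚ K (Algebra.trace ℚ K a) := by
      rw [← sub_eq_zero, ← hα, hα0]; rfl
    have : (finrank ℚ K : K) ≠ 0 := Nat.cast_ne_zero.mpr finrank_pos.ne'
    rw [map_div₀, map_natCast, ← hna, nsmul_eq_mul, mul_div_cancel_left₀ _ this]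
  · rw [← Algebra.coe_trace_int, Algebra.trace_finrank_smul_sub_algebraMap_trace, Int.cast_zero]
  · have hσ : σ α = finrank ℚ K * σ a - algebraMap ℚ ℂ (Algebra.trace ℚ K a) := by
      rw [hα, map_sub, map_nsmul, nsmul_eq_mul, RingHom.map_rat_algebraMap]
    calc ‖σ α‖ ≤ finrank ℚ K * ‖σ a‖ + ‖algebraMap ℚ ℂ (Algebra.trace ℚ K a)‖ := by
          rw [hσ]
          refine (norm_sub_le _ _).trans_eq ?_
          rw [norm_mul, Complex.norm_natCast]
      _ ≤ finrank ℚ K * M + finrank ℚ K * M := by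
          gcongr
          · exact hM σ
          · exact norm_algebraMap_trace_le hM
      _ = 2 * finrank ℚ K * M := by ring

theorem notMem_range_algebraMap_of_abs_re_lt_one {a : 𝓞 K} (ha : a ≠ 0) {σ : K →+* ℂ}
    (h : |(σ a).re| < 1) : (a : K) ∉ Set.range (algebraMap ℚ K) := by
  rintro ⟨q, hq⟩
  have hint : IsIntegral ℤ q := by
    rw [← isIntegral_algebraMap_iff (algebraMap ℚ K).injective, hq]
    exact a.isIntegral_coe
  obtain ⟨m, rfl⟩ := IsIntegrallyClosed.isIntegral_iff.mp hint
  have hm : m ≠ 0 := by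
    rintro rfl
    exact ha (RingOfIntegers.coe_eq_zero_iff.mp (by simp [← hq]))
  rw [← hq, RingHom.map_rat_algebraMap, eq_intCast (algebraMap ℤ ℚ), map_intCast,
    Complex.intCast_re] at h
  exact (Int.one_le_abs hm).not_gt (by exact_mod_cast h)

open scoped Classical in
theorem prod_ite_pow_mult (w₀ : InfinitePlace K) (x B : ℝ≥0) :
    ∏ w, (if w = w₀ then x else B) ^ mult w = x ^ mult w₀ * B ^ (finrank ℚ K - mult w₀) := by
  have hsum : mult w₀ + ∑ w ∈ Finset.univ.erase w₀, mult w = finrank ℚ K := by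
    rw [Finset.add_sum_erase _ _ (Finset.mem_univ w₀), sum_mult_eq]
  rw [← Finset.mul_prod_erase _ _ (Finset.mem_univ w₀), if_pos rfl,
    Finset.prod_congr rfl fun w hw ↦ by rw [if_neg (Finset.ne_of_mem_erase hw)],
    Finset.prod_pow_eq_pow_sum, ← hsum, Nat.add_sub_cancel_left]

open scoped Classical in
theorem exists_ne_zero_abs_re_lt_one_of_isReal {w₀ : InfinitePlace K} (hw₀ : IsReal w₀)
    {B : ℝ≥0} (hB : minkowskiBound K ↑1 < B ^ (finrank ℚ K - 1)) :
    ∃ a : 𝓞 K, a ≠ 0 ∧ |(w₀.embedding a).re| < 1 ∧ ∀ w : InfinitePlace K, w a < 1 + B := by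
  have hvol : minkowskiBound K ↑1 < volume (convexBodyLT K fun w ↦ if w = w₀ then 1 else B) := by
    rw [convexBodyLT_volume, prod_ite_pow_mult, one_pow, one_mul, mult, if_pos hw₀]
    exact hB.trans_le (le_mul_of_one_le_left' (by exact_mod_cast one_le_convexBodyLTFactor K))
  obtain ⟨a, ha, hlt⟩ := exists_ne_zero_mem_ringOfIntegers_lt K hvol
  refine ⟨a, ha, ?_, fun w ↦ (hlt w).trans_le ?_⟩
  · have := hlt w₀
    rw [if_pos rfl, ← norm_embedding_eq] at this
    exact (Complex.abs_re_le_norm _).trans_lt this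
  · split_ifs <;> simp

open scoped Classical in
theorem exists_ne_zero_abs_re_lt_one_of_isComplex {w₀ : InfinitePlace K} (hw₀ : IsComplex w₀)
    {B : ℝ≥0} (hB : minkowskiBound K ↑1 < B ^ (finrank ℚ K - 1)) :
    ∃ a : 𝓞 K, a ≠ 0 ∧ |(w₀.embedding a).re| < 1 ∧ ∀ w : InfinitePlace K, w a < 1 + B := by
  have h2 : 2 ≤ finrank ℚ K := by
    rw [← sum_mult_eq, ← (mult_isComplex ⟨w₀, hw₀⟩ :)]
    exact Finset.single_le_sum (fun _ _ ↦ Nat.zero_le _) (Finset.mem_univ w₀)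
  have hvol : minkowskiBound K ↑1 <
      volume (convexBodyLT' K (fun w ↦ if w = w₀ then NNReal.sqrt B else B) ⟨w₀, hw₀⟩) := by
    rw [convexBodyLT'_volume, prod_ite_pow_mult, mult_isComplex ⟨w₀, hw₀⟩, NNReal.sq_sqrt,
      ← pow_succ', show finrank ℚ K - 2 + 1 = finrank ℚ K - 1 by omega, ENNReal.coe_pow]
    exact hB.trans_le (le_mul_of_one_le_left' (by exact_mod_cast one_le_convexBodyLT'Factor K))
  obtain ⟨a, ha, hlt, hre, him⟩ := exists_ne_zero_mem_ringOfIntegers_lt' K ⟨w₀, hw₀⟩ hvol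
  refine ⟨a, ha, hre, fun w ↦ ?_⟩
  by_cases hw : w = w₀
  · rw [if_pos rfl, ← NNReal.coe_pow, NNReal.sq_sqrt] at him
    rw [hw, ← norm_embedding_eq]
    exact (Complex.norm_le_abs_re_add_abs_im _).trans_lt (add_lt_add hre him)
  · exact (hlt w hw).trans_le (by simp [hw])

theorem exists_ne_zero_trace_eq_zero_norm_le_of_minkowskiBound_lt {B : ℝ≥0}
    (hB : minkowskiBound K ↑1 < B ^ (finrank ℚ K - 1)) :
    ∃ α : 𝓞 K, α ≠ 0 ∧ Algebra.trace ℚ K (α : K) = 0 ∧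
      ∀ σ : K →+* ℂ, ‖σ α‖ ≤ 2 * finrank ℚ K * (1 + B) := by
  obtain ⟨w₀⟩ : Nonempty (InfinitePlace K) := inferInstance
  obtain ⟨a, ha, hre, hlt⟩ :
      ∃ a : 𝓞 K, a ≠ 0 ∧ |(w₀.embedding a).re| < 1 ∧ ∀ w : InfinitePlace K, w a < 1 + B := by
    rcases w₀.isReal_or_isComplex with hw₀ | hw₀
    exacts [exists_ne_zero_abs_re_lt_one_of_isReal hw₀ hB,
      exists_ne_zero_abs_re_lt_one_of_isComplex hw₀ hB]
  refine exists_ne_zero_trace_eq_zero_norm_le_of_notMem_range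
    (notMem_range_algebraMap_of_abs_re_lt_one ha hre) fun σ ↦ ?_
  rw [← InfinitePlace.apply]
  exact (hlt _).le

theorem minkowskiBound_one_le :
    minkowskiBound K ↑1 ≤ 2 ^ finrank ℚ K * NNReal.sqrt ‖discr K‖₊ := by
  rw [minkowskiBound, volume_fundamentalDomain_fractionalIdealLatticeBasis,
    volume_fundamentalDomain_latticeBasis, mixedEmbedding.finrank, Units.val_one,
    FractionalIdeal.absNorm_one, Rat.cast_one, ENNReal.ofReal_one, one_mul, mul_comm]
  gcongr
  exact mul_le_of_le_one_left zero_le (pow_le_one₀ zero_le (ENNReal.inv_le_one.mpr one_le_two))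

theorem minkowskiBound_one_lt_pow (h : 2 ≤ finrank ℚ K) :
    minkowskiBound K ↑1 <
      (8 * ‖discr K‖₊ ^ (1 / (2 * ((finrank ℚ K : ℝ) - 1))) : ℝ≥0) ^ (finrank ℚ K - 1) := by
  set n := finrank ℚ K
  have hroot : (‖discr K‖₊ ^ (1 / (2 * ((n : ℝ) - 1)))) ^ (n - 1) = NNReal.sqrt ‖discr K‖₊ := by
    rw [← NNReal.rpow_natCast, ← NNReal.rpow_mul, Nat.cast_sub (by omega), Nat.cast_one,
      NNReal.sqrt_eq_rpow]
    congr 1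
    have : (n : ℝ) - 1 ≠ 0 := by
      have : (2 : ℝ) ≤ n := by exact_mod_cast h
      linarith
    field_simp
  have hpow : (2 : ℝ≥0) ^ n < 8 ^ (n - 1) := by
    rw [show (8 : ℝ≥0) = 2 ^ 3 by norm_num, ← pow_mul]
    exact pow_lt_pow_right₀ one_lt_two (by omega)
  have hsqrt : 0 < NNReal.sqrt ‖discr K‖₊ := by
    rw [NNReal.sqrt_pos, nnnorm_pos]
    exact discr_ne_zero K
  refine minkowskiBound_one_le.trans_lt ?_
  rw [← ENNReal.coe_pow, mul_pow, hroot]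
  exact_mod_cast mul_lt_mul_of_pos_right hpow hsqrt

end NumberField

/-- For every `n ≥ 2` there is a constant `c > 0` depending only on `n` such that every
number field `K` of degree `n` contains a nonzero algebraic integer `α` of trace zero
with `|σ(α)| ≤ c · |d_K|^{1/(2(n−1))}` for every embedding `σ : K → ℂ`. -/
theorem stmt_0 (n : ℕ) (hn : 2 ≤ n) :
    ∃ c : ℝ, 0 < c ∧
      ∀ (K : Type) [Field K] [NumberField K], Module.finrank ℚ K = n →
        ∃ α : NumberField.RingOfIntegers K, α ≠ 0 ∧
          Algebra.trace ℚ K (α : K) = 0 ∧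
          ∀ σ : K →+* ℂ,
            ‖σ (α : K)‖ ≤
              c * |(NumberField.discr K : ℝ)| ^ ((1 : ℝ) / (2 * ((n : ℝ) - 1))) := by
  refine ⟨18 * n, by positivity, fun K _ _ hK ↦ ?_⟩
  subst hK
  set D : ℝ≥0 := ‖discr K‖₊ ^ (1 / (2 * ((finrank ℚ K : ℝ) - 1)))
  have hDeq : (D : ℝ) = |(discr K : ℝ)| ^ (1 / (2 * ((finrank ℚ K : ℝ) - 1))) := by
    rw [NNReal.coe_rpow, coe_nnnorm, Int.norm_eq_abs]
  have hD : (1 : ℝ) ≤ D := by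
    have : (2 : ℝ) ≤ finrank ℚ K := by exact_mod_cast hn
    rw [hDeq]
    exact Real.one_le_rpow (by exact_mod_cast Int.one_le_abs (discr_ne_zero K))
      (div_nonneg zero_le_one (by linarith))
  obtain ⟨α, hα, htr, hσ⟩ :=
    exists_ne_zero_trace_eq_zero_norm_le_of_minkowskiBound_lt (minkowskiBound_one_lt_pow hn)
  refine ⟨α, hα, htr, fun σ ↦ (hσ σ).trans ?_⟩
  rw [← hDeq, NNReal.coe_mul, NNReal.coe_ofNat]
  calc 2 * (finrank ℚ K : ℝ) * (1 + 8 * D) ≤ 2 * finrank ℚ K * (9 * D) := by gcongr; linarith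
    _ = 18 * finrank ℚ K * D := by ring
end

section
/- Fix nonzero complex numbers p, q, r, s, t, u. The set of ordered quadruples (V₁, V₂, V₃, V₄) of complex numbers satisfying V₁V₄ = p, V₂V₃ = q, V₁V₂² = r, V₃²V₄ = s, V₂V₄² = t, and V₁²V₃ = u has at most five elements. -/
/-! The relation `V₁V₂² · (V₁²V₃)² = V₁⁵ (V₂V₃)²` makes `V₁` a fifth root of `r u² / q²`, and
`V₁` determines the rest of the quadruple through `V₃ = u / V₁²`, `V₄ = s / V₃²` and
`V₂ = t / V₄²`. So the solution set is the image of a set of at most five fifth roots. -/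

open Polynomial in
theorem encard_setOf_pow_eq_le {R : Type*} [CommRing R] [IsDomain R] {n : ℕ} (hn : 0 < n)
    (a : R) : {x : R | x ^ n = a}.encard ≤ n := by
  classical
  have hroots : {x : R | x ^ n = a} = ↑(nthRootsFinset n a) := by
    ext x
    simp [mem_nthRootsFinset hn]
  rw [hroots, Set.encard_coe_eq_coe_finsetCard, nthRootsFinset_def]
  exact_mod_cast (Multiset.toFinset_card_le _).trans (card_nthRoots n a)

section Quadruple

variable {K : Type*} [Field K] {p q r s t u V₁ V₂ V₃ V₄ : K}

theorem pow_five_eq_of_products (hq : q ≠ 0) (h₂ : V₂ * V₃ = q) (h₃ : V₁ * V₂ ^ 2 = r)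
    (h₆ : V₁ ^ 2 * V₃ = u) : V₁ ^ 5 = r * u ^ 2 / q ^ 2 := by
  rw [eq_div_iff (pow_ne_zero 2 hq), ← h₂, ← h₃, ← h₆]
  ring

def quadrupleOfFst (s t u x : K) : K × K × K × K :=
  let V₃ := u / x ^ 2
  let V₄ := s / V₃ ^ 2
  (x, t / V₄ ^ 2, V₃, V₄)

theorem quadrupleOfFst_eq (hp : p ≠ 0) (hq : q ≠ 0) (h₁ : V₁ * V₄ = p) (h₂ : V₂ * V₃ = q)
    (h₄ : V₃ ^ 2 * V₄ = s) (h₅ : V₂ * V₄ ^ 2 = t) (h₆ : V₁ ^ 2 * V₃ = u) :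
    quadrupleOfFst s t u V₁ = (V₁, V₂, V₃, V₄) := by
  have hV₁ : V₁ ≠ 0 := left_ne_zero_of_mul (h₁ ▸ hp)
  have hV₄ : V₄ ≠ 0 := right_ne_zero_of_mul (h₁ ▸ hp)
  have hV₃ : V₃ ≠ 0 := right_ne_zero_of_mul (h₂ ▸ hq)
  have e₃ : u / V₁ ^ 2 = V₃ := by rw [← h₆, mul_div_cancel_left₀ _ (pow_ne_zero 2 hV₁)]
  have e₄ : s / V₃ ^ 2 = V₄ := by rw [← h₄, mul_div_cancel_left₀ _ (pow_ne_zero 2 hV₃)]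
  have e₂ : t / V₄ ^ 2 = V₂ := by rw [← h₅, mul_div_cancel_right₀ _ (pow_ne_zero 2 hV₄)]
  simp only [quadrupleOfFst, e₃, e₄, e₂]

end Quadruple

theorem stmt_10_general (p q r s t u : ℂ) (hp : p ≠ 0) (hq : q ≠ 0) :
    Set.encard {w : ℂ × ℂ × ℂ × ℂ | ∃ V₁ V₂ V₃ V₄ : ℂ, w = (V₁, V₂, V₃, V₄) ∧
      V₁ * V₄ = p ∧ V₂ * V₃ = q ∧ V₁ * V₂ ^ 2 = r ∧ V₃ ^ 2 * V₄ = s ∧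
      V₂ * V₄ ^ 2 = t ∧ V₁ ^ 2 * V₃ = u} ≤ 5 := by
  calc _ ≤ (quadrupleOfFst s t u '' {x | x ^ 5 = r * u ^ 2 / q ^ 2}).encard :=
        Set.encard_le_encard ?_
    _ ≤ _ := Set.encard_image_le _ _
    _ ≤ 5 := encard_setOf_pow_eq_le (by norm_num) _
  rintro _ ⟨V₁, V₂, V₃, V₄, rfl, h₁, h₂, h₃, h₄, h₅, h₆⟩
  exact ⟨V₁, pow_five_eq_of_products hq h₂ h₃ h₆, quadrupleOfFst_eq hp hq h₁ h₂ h₄ h₅ h₆⟩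

/-- For fixed nonzero `p, q, r, s, t, u`, the set of quadruples `(V₁, V₂, V₃, V₄)` with
`V₁V₄ = p`, `V₂V₃ = q`, `V₁V₂² = r`, `V₃²V₄ = s`, `V₂V₄² = t` and `V₁²V₃ = u` has at
most five elements. -/
theorem stmt_10 (p q r s t u : ℂ) (hp : p ≠ 0) (hq : q ≠ 0) (hr : r ≠ 0) (hs : s ≠ 0)
    (ht : t ≠ 0) (hu : u ≠ 0) :
    Set.encard {w : ℂ × ℂ × ℂ × ℂ | ∃ V₁ V₂ V₃ V₄ : ℂ, w = (V₁, V₂, V₃, V₄) ∧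
      V₁ * V₄ = p ∧ V₂ * V₃ = q ∧ V₁ * V₂ ^ 2 = r ∧ V₃ ^ 2 * V₄ = s ∧
      V₂ * V₄ ^ 2 = t ∧ V₁ ^ 2 * V₃ = u} ≤ 5 :=
  stmt_10_general p q r s t u hp hq
end

section
/- Let R be a commutative ring, let ζ ∈ R satisfy 1 + ζ + ζ² + ζ³ + ζ⁴ = 0 and ζ⁵ = 1, and let V₁, V₂, V₃, V₄ ∈ R. Set s = ζ² + ζ³ − ζ − ζ⁴. Then s² = 5 and (2(ζ − ζ⁴)(V₁V₂² − V₃²V₄))² = (2s − 10)·((V₁V₂² + V₃²V₄)² − 4·(V₁V₄)·(V₂V₃)²). -/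
/-! Writing `t = ζ² + ζ³`, the relation `1 + ζ + ⋯ + ζ⁴ = 0` gives `ζ + ζ⁴ = -1 - t`, so
`s = 2t + 1`, and `ζ⁵ = 1` follows from it. Then `s² = 4(t² + t) + 1 = 5` and
`(2(ζ − ζ⁴))² = 4(t − 2) = 2s − 10`, while `(a − b)² = (a + b)² − 4ab` with `a = V₁V₂²`,
`b = V₃²V₄` accounts for the `V`-factor. -/

section FifthRoot

variable {R : Type*} [CommRing R] {ζ : R}

theorem pow_five_eq_one_of_sum_pow_eq_zero (h : 1 + ζ + ζ ^ 2 + ζ ^ 3 + ζ ^ 4 = 0) :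
    ζ ^ 5 = 1 := by
  linear_combination (ζ - 1) * h

theorem gaussSum_sq_eq_five (h : 1 + ζ + ζ ^ 2 + ζ ^ 3 + ζ ^ 4 = 0) :
    (ζ ^ 2 + ζ ^ 3 - ζ - ζ ^ 4) ^ 2 = 5 := by
  linear_combination (ζ ^ 3 - 2 * ζ ^ 2 - ζ + 4) * pow_five_eq_one_of_sum_pow_eq_zero h - h

theorem sq_two_mul_sub_pow_four (h : 1 + ζ + ζ ^ 2 + ζ ^ 3 + ζ ^ 4 = 0) :
    (2 * (ζ - ζ ^ 4)) ^ 2 = 2 * (ζ ^ 2 + ζ ^ 3 - ζ - ζ ^ 4) - 10 := by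
  linear_combination (4 * ζ ^ 3 - 8) * pow_five_eq_one_of_sum_pow_eq_zero h + 2 * h

end FifthRoot

theorem stmt_12_general (R : Type*) [CommRing R] (ζ : R)
    (h1 : 1 + ζ + ζ ^ 2 + ζ ^ 3 + ζ ^ 4 = 0) (V₁ V₂ V₃ V₄ : R)
    (s : R) (hs : s = ζ ^ 2 + ζ ^ 3 - ζ - ζ ^ 4) :
    s ^ 2 = 5 ∧
    (2 * (ζ - ζ ^ 4) * (V₁ * V₂ ^ 2 - V₃ ^ 2 * V₄)) ^ 2 =
      (2 * s - 10) *
        ((V₁ * V₂ ^ 2 + V₃ ^ 2 * V₄) ^ 2 - 4 * (V₁ * V₄) * (V₂ * V₃) ^ 2) := by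
  subst hs
  refine ⟨gaussSum_sq_eq_five h1, ?_⟩
  rw [mul_pow, sq_two_mul_sub_pow_four h1]
  ring

/-- Let `ζ` satisfy `1 + ζ + ζ² + ζ³ + ζ⁴ = 0` and `ζ⁵ = 1`, and set
`s = ζ² + ζ³ − ζ − ζ⁴` (the Gauss sum, playing the role of `√5`). Then `s² = 5` and
`(2(ζ − ζ⁴)(V₁V₂² − V₃²V₄))² = (2s − 10)·(B² − 4ĀA²)` where `B = V₁V₂² + V₃²V₄`,
`Ā = V₁V₄`, `A = V₂V₃`. -/
theorem stmt_12 (R : Type*) [CommRing R] (ζ : R)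
    (h1 : 1 + ζ + ζ ^ 2 + ζ ^ 3 + ζ ^ 4 = 0) (h5 : ζ ^ 5 = 1) (V₁ V₂ V₃ V₄ : R)
    (s : R) (hs : s = ζ ^ 2 + ζ ^ 3 - ζ - ζ ^ 4) :
    s ^ 2 = 5 ∧
    (2 * (ζ - ζ ^ 4) * (V₁ * V₂ ^ 2 - V₃ ^ 2 * V₄)) ^ 2 =
      (2 * s - 10) *
        ((V₁ * V₂ ^ 2 + V₃ ^ 2 * V₄) ^ 2 - 4 * (V₁ * V₄) * (V₂ * V₃) ^ 2) :=
  stmt_12_general R ζ h1 V₁ V₂ V₃ V₄ s hs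
end
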